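/- Let (E,Σ,μ) be a measure space, let r,s ∈ (1,∞) satisfy r^{-1} + s^{-1} = 1, let u_n, u ∈ L_r(μ) and v_n, v ∈ L_s(μ), suppose u_n → u and v_n → v in measure, and suppose ‖u_n‖_{L_r(μ)} → ‖u‖_{L_r(μ)} and ‖v_n‖_{L_s(μ)} → ‖v‖_{L_s(μ)}. Then ∫_E |u_n v_n − u v| dμ → 0 and ∫_E u_n v_n dμ → ∫_E u v dμ as n → ∞. -/

import Mathlib

/-!
Convergence in measure together with convergence of the `L^p` norms forces convergence in `L^p`
(a theorem of F. Riesz): along an a.e. convergent subsequence, Fatou's lemma applied to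
`C (‖fₙ‖^p + ‖f‖^p) - ‖fₙ - f‖^p` shows `∫ ‖fₙ - f‖^p → 0`, and since every subsequence has such
a further subsequence, the whole sequence converges. By Hölder's inequality, multiplication is
continuous from `L^r × L^s` to `L^1`, so `uₙ vₙ → u v` in `L^1`, which gives both limits.
-/

open MeasureTheory Filter Topology
open scoped ENNReal

section

variable {α : Type*} [MeasurableSpace α] {μ : Measure α}

theorem tendsto_lintegral_zero_of_tendsto_lintegral_bound {F bound : ℕ → α → ℝ≥0∞}
    {g : α → ℝ≥0∞} (hF : ∀ n, AEMeasurable (F n) μ) (h_bound_meas : ∀ n, AEMeasurable (bound n) μ)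
    (h_le : ∀ n, F n ≤ bound n) (hF_lim : ∀ᵐ x ∂μ, Tendsto (fun n => F n x) atTop (𝓝 0))
    (h_bound_lim : ∀ᵐ x ∂μ, Tendsto (fun n => bound n x) atTop (𝓝 (g x)))
    (h_bound_int : Tendsto (fun n => ∫⁻ x, bound n x ∂μ) atTop (𝓝 (∫⁻ x, g x ∂μ)))
    (hg : ∫⁻ x, g x ∂μ ≠ ∞) :
    Tendsto (fun n => ∫⁻ x, F n x ∂μ) atTop (𝓝 0) := by
  set B := fun n => ∫⁻ x, bound n x ∂μ
  set I := fun n => ∫⁻ x, F n x ∂μ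
  have hB_fin : ∀ᶠ n in atTop, B n ≠ ∞ :=
    (h_bound_int.eventually (gt_mem_nhds hg.lt_top)).mono fun n h => h.ne
  have hI_le : ∀ n, I n ≤ B n := fun n => lintegral_mono (h_le n)
  have h_sub : ∀ᶠ n in atTop, ∫⁻ x, (bound n x - F n x) ∂μ = B n - I n :=
    hB_fin.mono fun n hn =>
      lintegral_sub' (hF n) ((hI_le n).trans_lt hn.lt_top).ne (.of_forall (h_le n))
  have h_fatou : ∫⁻ x, g x ∂μ ≤ liminf (fun n => B n - I n) atTop :=
    calc ∫⁻ x, g x ∂μ = ∫⁻ x, liminf (fun n => bound n x - F n x) atTop ∂μ := by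
          refine lintegral_congr_ae ?_
          filter_upwards [hF_lim, h_bound_lim] with x hFx hbx
          simpa using ((ENNReal.Tendsto.sub hbx hFx (.inr ENNReal.zero_ne_top)).liminf_eq).symm
      _ ≤ liminf (fun n => ∫⁻ x, (bound n x - F n x) ∂μ) atTop :=
          lintegral_liminf_le' fun n => (h_bound_meas n).sub (hF n)
      _ = liminf (fun n => B n - I n) atTop := liminf_congr h_sub
  have h_diff : Tendsto (fun n => B n - I n) atTop (𝓝 (∫⁻ x, g x ∂μ)) :=
    tendsto_of_le_liminf_of_limsup_le h_fatou <|
      (limsup_le_limsup (.of_forall fun n => tsub_le_self)).trans_eq h_bound_int.limsup_eq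
  have h_eq : ∀ᶠ n in atTop, B n - (B n - I n) = I n :=
    hB_fin.mono fun n hn => ENNReal.sub_sub_cancel hn (hI_le n)
  simpa using (ENNReal.Tendsto.sub h_bound_int h_diff (.inl hg)).congr' h_eq

section NormedAddCommGroup

variable {F : Type*} [NormedAddCommGroup F]

theorem enorm_sub_rpow_le (a b : F) {r : ℝ} (hr : 0 ≤ r) :
    ‖a - b‖ₑ ^ r ≤ ENNReal.LpAddConst (ENNReal.ofReal r)⁻¹ * (‖a‖ₑ ^ r + ‖b‖ₑ ^ r) :=
  (ENNReal.rpow_le_rpow enorm_sub_le hr).trans (ENNReal.rpow_add_le_mul_rpow_add_rpow' _ _ hr)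

theorem tendsto_lintegral_enorm_sub_rpow_of_tendsto_ae {f : ℕ → α → F} {g : α → F} {r : ℝ}
    (hr : 0 < r) (hf : ∀ n, AEStronglyMeasurable (f n) μ) (hg : AEStronglyMeasurable g μ)
    (hg_fin : ∫⁻ x, ‖g x‖ₑ ^ r ∂μ ≠ ∞)
    (h_ae : ∀ᵐ x ∂μ, Tendsto (fun n => f n x) atTop (𝓝 (g x)))
    (h_int : Tendsto (fun n => ∫⁻ x, ‖f n x‖ₑ ^ r ∂μ) atTop (𝓝 (∫⁻ x, ‖g x‖ₑ ^ r ∂μ))) :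
    Tendsto (fun n => ∫⁻ x, ‖f n x - g x‖ₑ ^ r ∂μ) atTop (𝓝 0) := by
  set C := ENNReal.LpAddConst (ENNReal.ofReal r)⁻¹
  have hC : C ≠ ∞ := (ENNReal.LpAddConst_lt_top _).ne
  have h_rpow : ∀ {h : α → F}, AEStronglyMeasurable h μ → AEMeasurable (fun x => ‖h x‖ₑ ^ r) μ :=
    fun hh => hh.enorm.pow_const r
  have h_lintegral_bound : ∀ h : α → F, AEStronglyMeasurable h μ →
      ∫⁻ x, C * (‖h x‖ₑ ^ r + ‖g x‖ₑ ^ r) ∂μ = C * (∫⁻ x, ‖h x‖ₑ ^ r ∂μ + ∫⁻ x, ‖g x‖ₑ ^ r ∂μ) :=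
    fun h hh => by rw [lintegral_const_mul' _ _ hC, lintegral_add_left' (h_rpow hh)]
  refine tendsto_lintegral_zero_of_tendsto_lintegral_bound
    (bound := fun n x => C * (‖f n x‖ₑ ^ r + ‖g x‖ₑ ^ r))
    (g := fun x => C * (‖g x‖ₑ ^ r + ‖g x‖ₑ ^ r))
    (fun n => h_rpow ((hf n).sub hg))
    (fun n => ((h_rpow (hf n)).add (h_rpow hg)).const_mul C)
    (fun n x => enorm_sub_rpow_le (f n x) (g x) hr.le) ?_ ?_ ?_ ?_
  · filter_upwards [h_ae] with x hx
    have := ((continuous_enorm.tendsto 0).comp (tendsto_sub_nhds_zero_iff.mpr hx)).ennrpow_const r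
    simpa [ENNReal.zero_rpow_of_pos hr] using this
  · filter_upwards [h_ae] with x hx
    exact ENNReal.Tendsto.const_mul
      (((continuous_enorm.tendsto _).comp hx).ennrpow_const r |>.add tendsto_const_nhds) (.inr hC)
  · simp_rw [h_lintegral_bound _ (hf _), h_lintegral_bound _ hg]
    exact ENNReal.Tendsto.const_mul (h_int.add tendsto_const_nhds) (.inr hC)
  · rw [h_lintegral_bound _ hg]
    exact ENNReal.mul_ne_top hC (ENNReal.add_ne_top.mpr ⟨hg_fin, hg_fin⟩)

theorem tendsto_eLpNorm_sub_of_tendstoInMeasure {p : ℝ≥0∞} (hp0 : p ≠ 0) (hp : p ≠ ∞)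
    {f : ℕ → α → F} {g : α → F} (hf : ∀ n, AEStronglyMeasurable (f n) μ) (hg : MemLp g p μ)
    (h_meas : TendstoInMeasure μ f atTop g)
    (h_norm : Tendsto (fun n => eLpNorm (f n) p μ) atTop (𝓝 (eLpNorm g p μ))) :
    Tendsto (fun n => eLpNorm (f n - g) p μ) atTop (𝓝 0) := by
  have hr : 0 < p.toReal := ENNReal.toReal_pos hp0 hp
  have h_lintegral : ∀ h : α → F, ∫⁻ x, ‖h x‖ₑ ^ p.toReal ∂μ = eLpNorm h p μ ^ p.toReal :=
    fun h => by rw [eLpNorm_eq_eLpNorm' hp0 hp, lintegral_rpow_enorm_eq_rpow_eLpNorm' hr]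
  have h_int : Tendsto (fun n => ∫⁻ x, ‖f n x‖ₑ ^ p.toReal ∂μ) atTop
      (𝓝 (∫⁻ x, ‖g x‖ₑ ^ p.toReal ∂μ)) := by
    simpa only [h_lintegral] using h_norm.ennrpow_const p.toReal
  have hg_fin : ∫⁻ x, ‖g x‖ₑ ^ p.toReal ∂μ ≠ ∞ := by
    rw [h_lintegral]; exact ENNReal.rpow_ne_top_of_nonneg hr.le hg.eLpNorm_ne_top
  have h_sub : Tendsto (fun n => ∫⁻ x, ‖f n x - g x‖ₑ ^ p.toReal ∂μ) atTop (𝓝 0) := by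
    refine tendsto_of_subseq_tendsto fun ns hns => ?_
    obtain ⟨ms, hms, h_ae⟩ :=
      (show TendstoInMeasure μ (fun i => f (ns i)) atTop g from
        fun ε hε => (h_meas ε hε).comp hns).exists_seq_tendsto_ae
    exact ⟨ms, tendsto_lintegral_enorm_sub_rpow_of_tendsto_ae hr (fun _ => hf _) hg.1 hg_fin h_ae
      (h_int.comp (hns.comp hms.tendsto_atTop))⟩
  simpa [eLpNorm_eq_lintegral_rpow_enorm_toReal hp0 hp, ENNReal.zero_rpow_of_pos (inv_pos.mpr hr)]
    using h_sub.ennrpow_const (1 / p.toReal)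

end NormedAddCommGroup

section Mul

variable {𝕜 : Type*} [NormedRing 𝕜] {p q r : ℝ≥0∞} [p.HolderTriple q r]

theorem eLpNorm_mul_sub_mul_le (hr : 1 ≤ r) {f f₀ g g₀ : α → 𝕜} (hf : AEStronglyMeasurable f μ)
    (hf₀ : AEStronglyMeasurable f₀ μ) (hg : AEStronglyMeasurable g μ)
    (hg₀ : AEStronglyMeasurable g₀ μ) :
    eLpNorm (f * g - f₀ * g₀) r μ ≤ eLpNorm (f - f₀) p μ * eLpNorm (g - g₀) q μ +
      eLpNorm (f - f₀) p μ * eLpNorm g₀ q μ + eLpNorm f₀ p μ * eLpNorm (g - g₀) q μ := by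
  have h_split : f * g - f₀ * g₀ = (f - f₀) * (g - g₀) + (f - f₀) * g₀ + f₀ * (g - g₀) := by
    noncomm_ring
  have h_holder : ∀ {φ ψ : α → 𝕜}, AEStronglyMeasurable φ μ → AEStronglyMeasurable ψ μ →
      eLpNorm (φ * ψ) r μ ≤ eLpNorm φ p μ * eLpNorm ψ q μ := fun {φ ψ} hφ hψ => by
    simpa [Pi.mul_def] using eLpNorm_le_eLpNorm_mul_eLpNorm_of_nnnorm hφ hψ (· * ·) 1
      (.of_forall fun x => by simpa using nnnorm_mul_le (φ x) (ψ x))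
  rw [h_split]
  refine (eLpNorm_add_le (((hf.sub hf₀).mul (hg.sub hg₀)).add ((hf.sub hf₀).mul hg₀))
    (hf₀.mul (hg.sub hg₀)) hr).trans (add_le_add ?_ (h_holder hf₀ (hg.sub hg₀)))
  exact (eLpNorm_add_le ((hf.sub hf₀).mul (hg.sub hg₀)) ((hf.sub hf₀).mul hg₀) hr).trans
    (add_le_add (h_holder (hf.sub hf₀) (hg.sub hg₀)) (h_holder (hf.sub hf₀) hg₀))

theorem tendsto_eLpNorm_mul_sub_mul {ι : Type*} {l : Filter ι} (hr : 1 ≤ r) {f g : ι → α → 𝕜}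
    {f₀ g₀ : α → 𝕜} (hf : ∀ i, AEStronglyMeasurable (f i) μ) (hf₀ : MemLp f₀ p μ)
    (hg : ∀ i, AEStronglyMeasurable (g i) μ) (hg₀ : MemLp g₀ q μ)
    (hf_lim : Tendsto (fun i => eLpNorm (f i - f₀) p μ) l (𝓝 0))
    (hg_lim : Tendsto (fun i => eLpNorm (g i - g₀) q μ) l (𝓝 0)) :
    Tendsto (fun i => eLpNorm (f i * g i - f₀ * g₀) r μ) l (𝓝 0) := by
  have h_bound : Tendsto (fun i => eLpNorm (f i - f₀) p μ * eLpNorm (g i - g₀) q μ +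
      eLpNorm (f i - f₀) p μ * eLpNorm g₀ q μ + eLpNorm f₀ p μ * eLpNorm (g i - g₀) q μ) l
      (𝓝 (0 * 0 + 0 * eLpNorm g₀ q μ + eLpNorm f₀ p μ * 0)) :=
    ((ENNReal.Tendsto.mul hf_lim (.inr ENNReal.zero_ne_top) hg_lim (.inr ENNReal.zero_ne_top)).add
      (ENNReal.Tendsto.mul_const hf_lim (.inr hg₀.eLpNorm_ne_top))).add
      (ENNReal.Tendsto.const_mul hg_lim (.inr hf₀.eLpNorm_ne_top))
  simp only [mul_zero, zero_mul, add_zero] at h_bound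
  exact tendsto_of_tendsto_of_tendsto_of_le_of_le tendsto_const_nhds h_bound (fun _ => zero_le)
    fun i => eLpNorm_mul_sub_mul_le hr (hf i) hf₀.1 (hg i) hg₀.1

end Mul

end

theorem integral_product_tendsto_of_tendstoInMeasure_general
    {E : Type*} [MeasurableSpace E] (μ : Measure E) (r s : ℝ)
    (hr : 1 < r) (hrs : r⁻¹ + s⁻¹ = 1)
    (u : ℕ → E → ℝ) (u₀ : E → ℝ) (v : ℕ → E → ℝ) (v₀ : E → ℝ)
    (hu : ∀ n, MemLp (u n) (ENNReal.ofReal r) μ)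
    (hu₀ : MemLp u₀ (ENNReal.ofReal r) μ)
    (hv : ∀ n, MemLp (v n) (ENNReal.ofReal s) μ)
    (hv₀ : MemLp v₀ (ENNReal.ofReal s) μ)
    (humeas : TendstoInMeasure μ u atTop u₀)
    (hvmeas : TendstoInMeasure μ v atTop v₀)
    (hunorm : Tendsto (fun n => eLpNorm (u n) (ENNReal.ofReal r) μ) atTop
      (𝓝 (eLpNorm u₀ (ENNReal.ofReal r) μ)))
    (hvnorm : Tendsto (fun n => eLpNorm (v n) (ENNReal.ofReal s) μ) atTop
      (𝓝 (eLpNorm v₀ (ENNReal.ofReal s) μ))) :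
    Tendsto (fun n => ∫ x, |u n x * v n x - u₀ x * v₀ x| ∂μ) atTop (𝓝 0) ∧
    Tendsto (fun n => ∫ x, u n x * v n x ∂μ) atTop (𝓝 (∫ x, u₀ x * v₀ x ∂μ)) := by
  have : (ENNReal.ofReal r).HolderConjugate (ENNReal.ofReal s) :=
    (Real.holderConjugate_iff.mpr ⟨hr, hrs⟩).ennrealOfReal
  have hu_lim := tendsto_eLpNorm_sub_of_tendstoInMeasure
    (ENNReal.HolderConjugate.ne_zero (ENNReal.ofReal r) (ENNReal.ofReal s))
    ENNReal.ofReal_ne_top (fun n => (hu n).1) hu₀ humeas hunorm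
  have hv_lim := tendsto_eLpNorm_sub_of_tendstoInMeasure
    (ENNReal.HolderConjugate.ne_zero (ENNReal.ofReal s) (ENNReal.ofReal r))
    ENNReal.ofReal_ne_top (fun n => (hv n).1) hv₀ hvmeas hvnorm
  have h_L1 : Tendsto (fun n => eLpNorm (u n * v n - u₀ * v₀) 1 μ) atTop (𝓝 0) :=
    tendsto_eLpNorm_mul_sub_mul le_rfl (fun n => (hu n).1) hu₀ (fun n => (hv n).1) hv₀
      hu_lim hv_lim
  have h_abs : ∀ n, ∫ x, |u n x * v n x - u₀ x * v₀ x| ∂μ =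
      (eLpNorm (u n * v n - u₀ * v₀) 1 μ).toReal := fun n => by
    rw [eLpNorm_one_eq_lintegral_enorm,
      ← integral_norm_eq_lintegral_enorm (((hu n).1.mul (hv n).1).sub (hu₀.1.mul hv₀.1))]
    rfl
  refine ⟨?_, tendsto_integral_of_L1' _ (hu₀.1.mul hv₀.1) ?_ h_L1⟩
  · simpa only [h_abs, Function.comp_def, ENNReal.toReal_zero] using
      (ENNReal.tendsto_toReal ENNReal.zero_ne_top).comp h_L1
  · exact .of_forall fun n => memLp_one_iff_integrable.mp ((hv n).mul' (hu n))

/-- If `uₙ → u` in `L_r`-norm sense (norms converge) and in measure, and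
`vₙ → v` likewise in `L_s` with `1/r + 1/s = 1`, then `∫ |uₙ vₙ − u v| dμ → 0` and
`∫ uₙ vₙ dμ → ∫ u v dμ`. -/
theorem integral_product_tendsto_of_tendstoInMeasure
    {E : Type*} [MeasurableSpace E] (μ : Measure E) (r s : ℝ)
    (hr : 1 < r) (hs : 1 < s) (hrs : r⁻¹ + s⁻¹ = 1)
    (u : ℕ → E → ℝ) (u₀ : E → ℝ) (v : ℕ → E → ℝ) (v₀ : E → ℝ)
    (hu : ∀ n, MemLp (u n) (ENNReal.ofReal r) μ)
    (hu₀ : MemLp u₀ (ENNReal.ofReal r) μ)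
    (hv : ∀ n, MemLp (v n) (ENNReal.ofReal s) μ)
    (hv₀ : MemLp v₀ (ENNReal.ofReal s) μ)
    (humeas : TendstoInMeasure μ u atTop u₀)
    (hvmeas : TendstoInMeasure μ v atTop v₀)
    (hunorm : Tendsto (fun n => eLpNorm (u n) (ENNReal.ofReal r) μ) atTop
      (𝓝 (eLpNorm u₀ (ENNReal.ofReal r) μ)))
    (hvnorm : Tendsto (fun n => eLpNorm (v n) (ENNReal.ofReal s) μ) atTop
      (𝓝 (eLpNorm v₀ (ENNReal.ofReal s) μ))) :
    Tendsto (fun n => ∫ x, |u n x * v n x - u₀ x * v₀ x| ∂μ) atTop (𝓝 0) ∧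
    Tendsto (fun n => ∫ x, u n x * v n x ∂μ) atTop (𝓝 (∫ x, u₀ x * v₀ x ∂μ)) :=
  integral_product_tendsto_of_tendstoInMeasure_general μ r s hr hrs u u₀ v v₀ hu hu₀ hv hv₀ humeas
    hvmeas hunorm hvnorm
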